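/- Fix K ≥ 2 and a finite nonempty set S of positive integers with minimum element s_min, and consider the battery-model instance with unit conversion efficiency, no leakage, identity utility, capacity C = s_min, initial level B₀ = s_min, and final requirement B_K = s_min, where the harvested amount in slot i equals the environmental input e(i). An online algorithm is a family of functions (f_i)_{i=0}^{K−1}, where f_i maps each history (e(0),…,e(i−1)) to a spending rate s(i) = f_i(e(0),…,e(i−1)) ∈ S ∪ {0}. If an online algorithm produces a feasible spending vector for every input sequence e : {0,…,K−1} → ℕ, then on the input e* defined by e*(i) = 0 for i < K−1 and e*(K−1) = s_min the algorithm spends 0 in every slot and obtains total utility 0, whereas there exists a feasible spending vector for e* with total utility s_min. -/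

import Mathlib

/-- Battery level evolution (in `ℤ`) with unit conversion efficiency and no
leakage: initial level `B₀`, capacity `C`, harvests `Q`, spending vector `s`. -/
def batteryLevelNL (B₀ C : ℕ) (Q : ℕ → ℕ) (s : ℕ → ℕ) : ℕ → ℤ
  | 0 => (B₀ : ℤ)
  | i + 1 => min (batteryLevelNL B₀ C Q s i + (Q i : ℤ) - (s i : ℤ)) (C : ℤ)

/-- Feasibility of a spending vector `s` over horizon `K`, capacity `C`,
initial level `B₀`, final requirement `BK`, harvests `Q`, and
spending-rate set `S`, with no leakage. -/
def FeasibleNL (K C B₀ BK : ℕ) (Q : ℕ → ℕ) (S : Set ℕ) (s : ℕ → ℕ) : Prop :=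
  (∀ i < K, s i ∈ S ∪ {0}) ∧
  (∀ i < K, (s i : ℤ) ≤ batteryLevelNL B₀ C Q s i) ∧
  (∀ i ≤ K, 0 ≤ batteryLevelNL B₀ C Q s i) ∧
  (BK : ℤ) ≤ batteryLevelNL B₀ C Q s K

/-!
With no harvest the battery can only drain, and each slot drains it by at least the amount spent, so
a spending vector that is feasible on the all-zero input and must end at its initial level spends
nothing. In every slot, the last included, the history of `e*` that an online algorithm sees is all
zeros, so on `e*` it spends what it spends on the all-zero input: nothing. Offline, spending exactly
the harvest keeps the battery at `s_min` and earns `s_min`.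
-/

section Battery

variable {B₀ C : ℕ} {Q s : ℕ → ℕ}

theorem batteryLevelNL_succ_le (i : ℕ) :
    batteryLevelNL B₀ C Q s (i + 1) ≤ batteryLevelNL B₀ C Q s i + Q i - s i :=
  min_le_left _ _

theorem batteryLevelNL_add_sum_le (n : ℕ) :
    batteryLevelNL B₀ C Q s n + ∑ i ∈ Finset.range n, (s i : ℤ) ≤
      B₀ + ∑ i ∈ Finset.range n, (Q i : ℤ) := by
  induction n with
  | zero => simp [batteryLevelNL]
  | succ n ih =>
    rw [Finset.sum_range_succ, Finset.sum_range_succ]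
    linarith [batteryLevelNL_succ_le (B₀ := B₀) (C := C) (Q := Q) (s := s) n]

theorem batteryLevelNL_eq_of_harvest_eq_spend (hB₀C : B₀ ≤ C) {n : ℕ}
    (hQ : ∀ i < n, Q i = s i) : batteryLevelNL B₀ C Q s n = B₀ := by
  induction n with
  | zero => rfl
  | succ n ih =>
    rw [batteryLevelNL, ih fun i hi => hQ i (by omega), hQ n (by omega)]
    simpa using hB₀C

end Battery

section Feasible

variable {K C B₀ BK : ℕ} {Q : ℕ → ℕ} {S : Set ℕ} {s : ℕ → ℕ}

theorem FeasibleNL.sum_add_le (h : FeasibleNL K C B₀ BK Q S s) :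
    ∑ i ∈ Finset.range K, (s i : ℤ) + BK ≤ B₀ + ∑ i ∈ Finset.range K, (Q i : ℤ) := by
  linarith [h.2.2.2, batteryLevelNL_add_sum_le (B₀ := B₀) (C := C) (Q := Q) (s := s) K]

theorem FeasibleNL.eq_zero_of_harvest_eq_zero (h : FeasibleNL K C B₀ BK Q S s)
    (hQ : ∀ i < K, Q i = 0) (hBK : B₀ ≤ BK) : ∀ i < K, s i = 0 := by
  have hsum : ∑ i ∈ Finset.range K, (s i : ℤ) ≤ 0 := by
    have hQsum : ∑ i ∈ Finset.range K, (Q i : ℤ) = 0 :=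
      Finset.sum_eq_zero fun i hi => by simp [hQ i (Finset.mem_range.1 hi)]
    have : (B₀ : ℤ) ≤ BK := by exact_mod_cast hBK
    linarith [h.sum_add_le]
  intro i hi
  have := (Finset.sum_eq_zero_iff_of_nonneg fun j _ => Int.natCast_nonneg (s j)).1
    (le_antisymm hsum (Finset.sum_nonneg fun j _ => Int.natCast_nonneg (s j))) i
    (Finset.mem_range.2 hi)
  exact_mod_cast this

theorem feasibleNL_of_spend_eq_harvest (hB₀C : B₀ ≤ C) (hBK : BK ≤ B₀)
    (hmem : ∀ i < K, s i ∈ S ∪ {0}) (hle : ∀ i < K, s i ≤ B₀) (hQ : ∀ i < K, Q i = s i) :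
    FeasibleNL K C B₀ BK Q S s := by
  have hlevel : ∀ i ≤ K, batteryLevelNL B₀ C Q s i = B₀ := fun i hi =>
    batteryLevelNL_eq_of_harvest_eq_spend hB₀C fun j hj => hQ j (by omega)
  refine ⟨hmem, fun i hi => ?_, fun i hi => ?_, ?_⟩
  · rw [hlevel i hi.le]
    exact_mod_cast hle i hi
  · rw [hlevel i hi]
    positivity
  · rw [hlevel K le_rfl]
    exact_mod_cast hBK

end Feasible

theorem online_no_guarantee_general
    (K : ℕ) (hK : 2 ≤ K)
    (S : Finset ℕ) (hS : S.Nonempty)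
    (smin : ℕ) (hsmin : smin = S.min' hS)
    (alg : (i : ℕ) → (Fin i → ℕ) → ℕ)
    (halg : ∀ e : ℕ → ℕ,
      FeasibleNL K smin smin smin e (↑S) (fun i => alg i (fun j => e j)))
    (estar : ℕ → ℕ) (hestar : ∀ i, estar i = if i = K - 1 then smin else 0) :
    (∀ i < K, alg i (fun j => estar j) = 0) ∧
    (∃ s : ℕ → ℕ, FeasibleNL K smin smin smin estar (↑S) s ∧
      ∑ i ∈ Finset.range K, s i = smin) := by
  have hzero := (halg fun _ => 0).eq_zero_of_harvest_eq_zero (fun _ _ => rfl) le_rfl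
  refine ⟨fun i hi => ?_, estar, ?_, ?_⟩
  · have hhistory : (fun j : Fin i => estar j) = fun _ => 0 :=
      funext fun j => by rw [hestar, if_neg (by omega)]
    rw [hhistory]
    exact hzero i hi
  · refine feasibleNL_of_spend_eq_harvest le_rfl le_rfl (fun i _ => ?_) (fun i _ => ?_)
      fun _ _ => rfl
    · rw [hestar]
      split_ifs
      · exact Or.inl (hsmin ▸ S.min'_mem hS)
      · exact Or.inr rfl
    · rw [hestar]
      split_ifs <;> omega
  · simp only [hestar, Finset.sum_ite_eq', Finset.mem_range]
    rw [if_pos (by omega)]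

/-- No online algorithm has a performance guarantee when `B_K > 0`: any online
algorithm (a family of functions of the history `e(0),…,e(i−1)`) that is
feasible on every input spends `0` in every slot on the input `e*` (zero until
the last slot, then `s_min`), obtaining utility `0`, while a feasible vector
for `e*` with total utility `s_min` exists. -/
theorem online_no_guarantee
    (K : ℕ) (hK : 2 ≤ K)
    (S : Finset ℕ) (hS : S.Nonempty) (hpos : ∀ x ∈ S, 0 < x)
    (smin : ℕ) (hsmin : smin = S.min' hS)
    (alg : (i : ℕ) → (Fin i → ℕ) → ℕ)
    (halg : ∀ e : ℕ → ℕ,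
      FeasibleNL K smin smin smin e (↑S) (fun i => alg i (fun j => e j)))
    (estar : ℕ → ℕ) (hestar : ∀ i, estar i = if i = K - 1 then smin else 0) :
    (∀ i < K, alg i (fun j => estar j) = 0) ∧
    (∃ s : ℕ → ℕ, FeasibleNL K smin smin smin estar (↑S) s ∧
      ∑ i ∈ Finset.range K, s i = smin) :=
  online_no_guarantee_general K hK S hS smin hsmin alg halg estar hestar
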